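/- A positive weight function $\mu$ on $\mathbb{Z}$ is a doubling minimizer (i.e., $C_\mu = C_{\mathbb{Z}} = 3$) if and only if $\mu$ is constant. -/

import Mathlib

open Finset

/-!
Taking `k = 0` in `C_μ ≤ 3` gives `μ (n - 1) + μ n + μ (n + 1) ≤ 3 μ n`, i.e. `μ` is
concave. A concave function on `ℤ` with a strictly negative increment decreases at least linearly
to the right, and one with a strictly positive increment decreases at least linearly to the
left; a positive concave function is therefore constant. Conversely, for a constant weight
every ratio is `(4k + 3) / (2k + 1) ≤ 3`, with equality at `k = 0`.
-/

/-- The closed ball of center `n` and radius `k` in `ℤ` (infinite path graph). -/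
noncomputable def zball (n : ℤ) (k : ℕ) : Finset ℤ := Finset.Icc (n - k) (n + k)

/-- The set of doubling quotients of a weight `μ` on `ℤ`. -/
def ratioSet (μ : ℤ → ℝ) : Set ℝ :=
  {x | ∃ (n : ℤ) (k : ℕ),
    x = (∑ i ∈ zball n (2 * k + 1), μ i) / (∑ i ∈ zball n k, μ i)}

lemma sum_zball_const (c : ℝ) (n : ℤ) (k : ℕ) :
    ∑ _i ∈ zball n k, c = (2 * k + 1) * c := by
  have hcard : n + k + 1 - (n - k) = ((2 * k + 1 : ℕ) : ℤ) := by push_cast; ring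
  rw [zball, sum_const, Int.card_Icc, hcard, Int.toNat_natCast, nsmul_eq_mul]
  push_cast
  ring

lemma sum_zball_zero (μ : ℤ → ℝ) (n : ℤ) : ∑ i ∈ zball n 0, μ i = μ n := by
  simp [zball]

lemma sum_zball_one (μ : ℤ → ℝ) (n : ℤ) :
    ∑ i ∈ zball n 1, μ i = μ (n - 1) + μ n + μ (n + 1) := by
  have hball : zball n 1 = {n - 1, n, n + 1} := by
    ext x
    simp only [zball, mem_Icc, mem_insert, mem_singleton, Nat.cast_one]
    omega
  rw [hball, sum_insert (by simp only [mem_insert, mem_singleton]; omega),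
    sum_insert (by simp only [mem_singleton]; omega), sum_singleton, add_assoc]

lemma monotone_of_concave_of_bddBelow {f : ℤ → ℝ}
    (hconc : ∀ n, f (n - 1) + f (n + 1) ≤ 2 * f n) (hbdd : BddBelow (Set.range f)) :
    Monotone f := by
  set d : ℤ → ℝ := fun n => f (n + 1) - f n
  have hd : Antitone d := antitone_int_of_succ_le fun n => by
    have := hconc (n + 1)
    simp only [d, add_sub_cancel_right] at this ⊢
    linarith
  refine monotone_int_of_le_succ fun n => ?_
  by_contra! hdec
  have hlin : ∀ k : ℕ, f (n + k) ≤ f n + k * d n := by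
    intro k
    induction k with
    | zero => simp
    | succ k ih =>
      have hstep : d (n + k) ≤ d n := hd (by omega)
      simp only [d] at hstep
      push_cast
      rw [← add_assoc]
      linarith
  obtain ⟨b, hb⟩ := hbdd
  obtain ⟨k, hk⟩ := exists_nat_gt ((f n - b) / -d n)
  rw [div_lt_iff₀ (by simp only [d]; linarith)] at hk
  linarith [hlin k, hb ⟨n + k, rfl⟩]

lemma eq_of_concave_of_bddBelow {f : ℤ → ℝ}
    (hconc : ∀ n, f (n - 1) + f (n + 1) ≤ 2 * f n) (hbdd : BddBelow (Set.range f))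
    (m n : ℤ) : f m = f n := by
  have hmono := monotone_of_concave_of_bddBelow hconc hbdd
  have hreflect : Monotone (f ∘ Neg.neg) := by
    refine monotone_of_concave_of_bddBelow (fun n => ?_)
      (hbdd.mono (Set.range_comp_subset_range _ _))
    show f (-(n - 1)) + f (-(n + 1)) ≤ 2 * f (-n)
    rw [neg_sub', sub_neg_eq_add, neg_add', add_comm]
    exact hconc (-n)
  have hanti : Antitone f := fun a b hab => by simpa using hreflect (neg_le_neg hab)
  rcases le_total m n with h | h
  · exact le_antisymm (hmono h) (hanti h)
  · exact le_antisymm (hanti h) (hmono h)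

lemma concave_of_three_mem_upperBounds_ratioSet {μ : ℤ → ℝ} (hμ : ∀ n, 0 < μ n)
    (h3 : 3 ∈ upperBounds (ratioSet μ)) (n : ℤ) :
    μ (n - 1) + μ (n + 1) ≤ 2 * μ n := by
  have hk0 := h3 ⟨n, 0, rfl⟩
  rw [sum_zball_zero, Nat.mul_zero, Nat.zero_add, sum_zball_one, div_le_iff₀ (hμ n)] at hk0
  linarith

lemma isGreatest_ratioSet_const {c : ℝ} (hc : 0 < c) :
    IsGreatest (ratioSet fun _ => c) 3 := by
  refine ⟨⟨0, 0, ?_⟩, ?_⟩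
  · rw [sum_zball_const, sum_zball_const]
    field_simp
    norm_num
  · rintro x ⟨n, k, rfl⟩
    rw [sum_zball_const, sum_zball_const, div_le_iff₀ (by positivity)]
    push_cast
    nlinarith

/-- A positive weight `μ` on `ℤ` is a doubling minimizer, i.e. `C_μ = C_ℤ = 3`,
if and only if `μ` is constant. -/
theorem stmt_13 (μ : ℤ → ℝ) (hμ : ∀ n, 0 < μ n) :
    sSup (ratioSet μ) = 3 ↔ ∀ m n : ℤ, μ m = μ n := by
  constructor
  · intro hsup
    have hbdd : BddAbove (ratioSet μ) := by
      by_contra h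
      rw [Real.sSup_of_not_bddAbove h] at hsup
      norm_num at hsup
    have h3 : 3 ∈ upperBounds (ratioSet μ) := fun x hx => hsup ▸ le_csSup hbdd hx
    refine eq_of_concave_of_bddBelow (concave_of_three_mem_upperBounds_ratioSet hμ h3) ⟨0, ?_⟩
    rintro _ ⟨n, rfl⟩
    exact (hμ n).le
  · intro hconst
    have hμc : μ = fun _ => μ 0 := funext fun n => hconst n 0
    rw [hμc]
    exact (isGreatest_ratioSet_const (hμ 0)).csSup_eq
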